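/- arXiv:2310.11580 — 3 statements merged into one kernel-verified Lean document; each statement's English description precedes it below -/
import Mathlib

section
/- Let G and H be graphs on the same vertex set such that every vertex v ∈ V(H) has degree at most d in both H and G. If there is a collection F of at least 4d+1 linear forests covering the edges of G, then there is a collection of |F| linear forests covering the edges of G ∪ H. -/
open SimpleGraph Set

namespace Paper

variable {V : Type*}

/-- Degree of a vertex, via the cardinality of its neighbour set. -/
noncomputable def deg (G : SimpleGraph V) (v : V) : ℕ := (G.neighborSet v).ncard

/-- A linear forest: an acyclic graph of maximum degree at most 2,
i.e. a disjoint union of paths. -/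
def IsLinearForest (G : SimpleGraph V) : Prop :=
  G.IsAcyclic ∧ ∀ v, deg G v ≤ 2

/-- Maximum degree. -/
noncomputable def maxDeg [Fintype V] (G : SimpleGraph V) : ℕ :=
  Finset.univ.sup fun v => deg G v

/-- Minimum degree. -/
noncomputable def minDeg [Fintype V] [Nonempty V] (G : SimpleGraph V) : ℕ :=
  Finset.univ.inf' Finset.univ_nonempty (deg G)

/-- A bipartition of a graph. -/
def IsBipartition (G : SimpleGraph V) (A B : Set V) : Prop :=
  Disjoint A B ∧ A ∪ B = Set.univ ∧
    ∀ u v, G.Adj u v → (u ∈ A ∧ v ∈ B) ∨ (u ∈ B ∧ v ∈ A)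

/-- The number of nontrivial (path) components of a linear forest. -/
noncomputable def numComponents (F : SimpleGraph V) : ℕ :=
  Nat.card {c : F.ConnectedComponent // (F.support ∩ c.supp).Nonempty}

/-!
Give each edge of `G` to just one forest that contains it, so that the forests become pairwise
edge-disjoint; a vertex `v` is then non-isolated in at most `deg v` of them. Now insert the edges
`uv` of `H` one at a time into a forest in which both `u` and `v` are still isolated: by
disjointness at most `deg (G ⊔ H) u + deg (G ⊔ H) v ≤ 4d` forests are excluded, and joining two
isolated vertices of a linear forest by an edge leaves a linear forest.
-/

open Function

lemma deg_mono [Finite V] {G G' : SimpleGraph V} (h : G ≤ G') (v : V) : deg G v ≤ deg G' v :=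
  ncard_le_ncard (fun _ hw => h hw) (toFinite _)

lemma deg_sup_le (G H : SimpleGraph V) (v : V) : deg (G ⊔ H) v ≤ deg G v + deg H v := by
  rw [deg, neighborSet_sup]
  exact ncard_union_le _ _

lemma deg_eq_zero_of_notMem_support {G : SimpleGraph V} {v : V} (hv : v ∉ G.support) :
    deg G v = 0 := by
  have : G.neighborSet v = ∅ := eq_empty_of_forall_notMem fun w hw => hv ⟨w, hw⟩
  rw [deg, this, ncard_empty]

lemma IsLinearForest.anti [Finite V] {F F' : SimpleGraph V} (h : F ≤ F')
    (hF' : IsLinearForest F') : IsLinearForest F :=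
  ⟨hF'.1.anti h, fun v => (deg_mono h v).trans (hF'.2 v)⟩

lemma IsLinearForest.sup_edge {F : SimpleGraph V} (hF : IsLinearForest F) {u v : V}
    (huv : u ≠ v) (hu : u ∉ F.support) (hv : v ∉ F.support) :
    IsLinearForest (F ⊔ edge u v) := by
  refine ⟨hF.1.sup_edge_of_not_reachable fun h => hu (mem_support_of_reachable huv h),
    fun w => (deg_sup_le F _ w).trans ?_⟩
  by_cases hw : w ∈ F.support
  · have hedge : deg (edge u v) w = 0 := by
      refine deg_eq_zero_of_notMem_support fun hw' => ?_
      obtain ⟨x, hx⟩ := (mem_support _).mp hw'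
      rw [edge_adj] at hx
      rcases hx with ⟨⟨rfl, -⟩ | ⟨rfl, -⟩, -⟩
      exacts [hu hw, hv hw]
    simpa [hedge] using hF.2 w
  · have hedge : (edge u v).neighborSet w ⊆ {u, v} := by
      intro x hx
      rw [mem_neighborSet, edge_adj] at hx
      rcases hx with ⟨⟨-, rfl⟩ | ⟨-, rfl⟩, -⟩ <;> simp
    rw [deg_eq_zero_of_notMem_support hw, zero_add]
    exact (ncard_le_ncard hedge (toFinite _)).trans (ncard_pair huv).le

/-- Each edge is kept only in the first graph of the family that contains it. -/
lemma exists_pairwise_disjoint_le_of_edgeSet_subset_iUnion {ι : Type*} [LinearOrder ι]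
    [WellFoundedLT ι] {G : SimpleGraph V} {F : ι → SimpleGraph V}
    (hcov : G.edgeSet ⊆ ⋃ i, (F i).edgeSet) :
    ∃ K : ι → SimpleGraph V, (∀ i, K i ≤ F i) ∧ Pairwise (Disjoint on K) ∧
      G.edgeSet ⊆ ⋃ i, (K i).edgeSet := by
  refine ⟨fun i => F i \ ⨆ j < i, F j, fun i => sdiff_le, ?_, ?_⟩
  · refine (pairwise_disjoint_on _).mpr fun i j hij => ?_
    exact (disjoint_sdiff_self_right.mono_left (le_iSup₂ (f := fun k _ => F k) i hij)).mono_left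
      sdiff_le
  · refine hcov.trans (iUnion_subset fun i => ?_)
    induction i using WellFoundedLT.induction with
    | ind i ih =>
      intro e he
      by_cases hprev : e ∈ (⨆ j < i, F j).edgeSet
      · simp only [edgeSet_iSup, mem_iUnion] at hprev
        obtain ⟨j, hji, hj⟩ := hprev
        exact ih j hji hj
      · exact mem_iUnion.mpr ⟨i, by rw [edgeSet_sdiff]; exact ⟨he, hprev⟩⟩

lemma ncard_setOf_mem_support_le_deg [Finite V] {ι : Type*} {K : ι → SimpleGraph V}
    {J : SimpleGraph V} (hK : Pairwise (Disjoint on K)) (hKJ : ∀ i, K i ≤ J) (u : V) :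
    {i | u ∈ (K i).support}.ncard ≤ deg J u := by
  have : Nonempty V := ⟨u⟩
  let nb : ι → V := fun i => Classical.epsilon ((K i).Adj u)
  have hnb : ∀ i ∈ {i | u ∈ (K i).support}, (K i).Adj u (nb i) :=
    fun i hi => Classical.epsilon_spec hi
  refine ncard_le_ncard_of_injOn nb (fun i hi => hKJ i (hnb i hi)) ?_ (toFinite _)
  intro i hi j hj (hij : nb i = nb j)
  by_contra hne
  have hj' := hnb j hj
  rw [← hij] at hj'
  exact (hK hne).le_bot (show (K i ⊓ K j).Adj u _ from ⟨hnb i hi, hj'⟩)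

structure IsLinearForestPacking {ι : Type*} (L : SimpleGraph V) (F : ι → SimpleGraph V) :
    Prop where
  pairwise_disjoint : Pairwise (Disjoint on F)
  le : ∀ i, F i ≤ L
  isLinearForest : ∀ i, IsLinearForest (F i)

lemma pairwise_disjoint_update_sup {α ι : Type*} [DecidableEq ι] [DistribLattice α] [OrderBot α]
    {f : ι → α} (hf : Pairwise (Disjoint on f)) {i : ι} {a : α}
    (ha : ∀ j ≠ i, Disjoint (f j) a) : Pairwise (Disjoint on update f i (f i ⊔ a)) := by
  intro j k hjk
  change Disjoint (update f i (f i ⊔ a) j) (update f i (f i ⊔ a) k)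
  rcases eq_or_ne j i with rfl | hj
  · rw [update_self, update_of_ne hjk.symm]
    exact disjoint_sup_left.mpr ⟨hf hjk, (ha k hjk.symm).symm⟩
  rcases eq_or_ne k i with rfl | hk
  · rw [update_self, update_of_ne hjk]
    exact disjoint_sup_right.mpr ⟨hf hjk, ha j hjk⟩
  rw [update_of_ne hj, update_of_ne hk]
  exact hf hjk

namespace IsLinearForestPacking

variable [Finite V] {ι : Type*} [Finite ι] {L : SimpleGraph V} {F : ι → SimpleGraph V}

lemma exists_le_mem_edgeSet (hF : IsLinearForestPacking L F) {u v : V} (huv : L.Adj u v)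
    (hdeg : deg L u + deg L v < Nat.card ι) :
    ∃ F', IsLinearForestPacking L F' ∧ F ≤ F' ∧ s(u, v) ∈ ⋃ i, (F' i).edgeSet := by
  classical
  by_cases hcov : s(u, v) ∈ ⋃ i, (F i).edgeSet
  · exact ⟨F, hF, le_rfl, hcov⟩
  obtain ⟨i, hi⟩ : ∃ i, i ∉ {i | u ∈ (F i).support} ∪ {i | v ∈ (F i).support} := by
    by_contra! hall
    have : Nat.card ι ≤ deg L u + deg L v :=
      calc Nat.card ι = (univ : Set ι).ncard := (ncard_univ ι).symm
        _ ≤ ({i | u ∈ (F i).support} ∪ {i | v ∈ (F i).support}).ncard :=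
          ncard_le_ncard fun i _ => hall i
        _ ≤ _ := ncard_union_le _ _
        _ ≤ deg L u + deg L v :=
          add_le_add (ncard_setOf_mem_support_le_deg hF.pairwise_disjoint hF.le u)
            (ncard_setOf_mem_support_le_deg hF.pairwise_disjoint hF.le v)
    omega
  simp only [mem_union, mem_ofPred_eq, not_or] at hi
  have hfresh : ∀ j, Disjoint (F j) (edge u v) :=
    fun j => (disjoint_edge _).mpr fun h => hcov (mem_iUnion.mpr ⟨j, h⟩)
  refine ⟨update F i (F i ⊔ edge u v), ⟨?_, fun j => ?_, fun j => ?_⟩, fun j => ?_,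
    mem_iUnion.mpr ⟨i, ?_⟩⟩
  · exact pairwise_disjoint_update_sup hF.pairwise_disjoint fun j _ => hfresh j
  · rcases eq_or_ne j i with rfl | hj
    · simpa using sup_le (hF.le j) ((edge_le_iff _).mpr (Or.inr huv))
    · simpa [hj] using hF.le j
  · rcases eq_or_ne j i with rfl | hj
    · simpa using (hF.isLinearForest j).sup_edge huv.ne hi.1 hi.2
    · simpa [hj] using hF.isLinearForest j
  · rcases eq_or_ne j i with rfl | hj
    · simp
    · simp [hj]
  · simp [edgeSet_edge_of_ne huv.ne]

lemma exists_le_edgeSet_subset (hF : IsLinearForestPacking L F) (S : Set (Sym2 V))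
    (hS : ∀ u v, s(u, v) ∈ S → L.Adj u v ∧ deg L u + deg L v < Nat.card ι) :
    ∃ F', IsLinearForestPacking L F' ∧ F ≤ F' ∧ S ⊆ ⋃ i, (F' i).edgeSet := by
  induction S, S.toFinite using Set.Finite.induction_on with
  | empty => exact ⟨F, hF, le_rfl, empty_subset _⟩
  | @insert e S _ _ ih =>
    obtain ⟨F₁, hF₁, hFF₁, hSF₁⟩ := ih fun u v huv => hS u v (mem_insert_of_mem _ huv)
    induction e using Sym2.ind with
    | _ u v =>
    obtain ⟨huv, hdeg⟩ := hS u v (mem_insert _ _)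
    obtain ⟨F₂, hF₂, hF₁F₂, heF₂⟩ := hF₁.exists_le_mem_edgeSet huv hdeg
    refine ⟨F₂, hF₂, hFF₁.trans hF₁F₂, insert_subset heF₂ (hSF₁.trans ?_)⟩
    exact iUnion_mono fun i => edgeSet_mono (hF₁F₂ i)

end IsLinearForestPacking

/-- merging a low-degree graph `H` into a cover of `G` by
at least `4d+1` linear forests. -/
theorem extend_cover_by_low_degree_graph [Fintype V]
    (G H : SimpleGraph V) (d m : ℕ)
    (hH : ∀ v ∈ H.support, deg H v ≤ d ∧ deg G v ≤ d)
    (hm : 4 * d + 1 ≤ m)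
    (F : Fin m → SimpleGraph V)
    (hF : ∀ i, F i ≤ G ∧ IsLinearForest (F i))
    (hcov : G.edgeSet ⊆ ⋃ i, (F i).edgeSet) :
    ∃ F' : Fin m → SimpleGraph V,
      (∀ i, F' i ≤ G ⊔ H ∧ IsLinearForest (F' i)) ∧
      (G ⊔ H).edgeSet ⊆ ⋃ i, (F' i).edgeSet := by
  obtain ⟨K, hKF, hKdisj, hKcov⟩ := exists_pairwise_disjoint_le_of_edgeSet_subset_iUnion hcov
  have hK : IsLinearForestPacking (G ⊔ H) K :=
    ⟨hKdisj, fun i => (hKF i).trans ((hF i).1.trans le_sup_left),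
      fun i => (hF i).2.anti (hKF i)⟩
  have hdeg : ∀ v ∈ H.support, deg (G ⊔ H) v ≤ 2 * d := fun v hv =>
    (deg_sup_le G H v).trans (by have := hH v hv; omega)
  obtain ⟨F', hF', hKF', hHF'⟩ := hK.exists_le_edgeSet_subset H.edgeSet fun u v huv => by
    have hu := hdeg u ⟨v, huv⟩
    have hv := hdeg v ⟨u, huv.symm⟩
    exact ⟨Or.inr huv, by rw [Nat.card_eq_fintype_card, Fintype.card_fin]; omega⟩
  refine ⟨F', fun i => ⟨hF'.le i, hF'.isLinearForest i⟩, ?_⟩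
  rw [edgeSet_sup]
  exact union_subset (hKcov.trans (iUnion_mono fun i => edgeSet_mono (hKF' i))) hHF'

end Paper
end

section
/- Let k ≥ 1 and let G' be a bipartite graph with parts A and B of maximum degree at most 2k such that every vertex of A has degree at most k. Then the edges of G' can be partitioned into k subgraphs in each of which every vertex of A has degree at most 1 and every vertex of B has degree at most 2, and each such subgraph is a linear forest. -/
open SimpleGraph Set

namespace Paper

variable {V : Type*}

section Aux
open Finset
universe u
variable {W : Type*} {E : Type*}

noncomputable def fcard [Fintype E] (α : E → W) (a : W) : ℕ :=
  @Finset.card E (@Finset.filter E (fun e => α e = a) (Classical.decPred _) Finset.univ)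

lemma fcard_def [Fintype E] (α : E → W) (a : W) [DecidablePred fun e => α e = a] :
    fcard α a = (Finset.univ.filter fun e => α e = a).card := by
  rw [fcard]; congr!

lemma fcard_pos [Fintype E] (α : E → W) (e : E) : 0 < fcard α (α e) := by
  classical
  rw [fcard_def]
  exact Finset.card_pos.mpr ⟨e, by simp⟩

lemma fcard_eq_zero_of_notmem_image [Fintype E] [DecidableEq W] (α : E → W) (a : W)
    (ha : a ∉ Finset.univ.image α) : fcard α a = 0 := by
  classical
  rw [fcard_def, Finset.card_eq_zero, Finset.filter_eq_empty_iff]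
  rintro e - rfl
  exact ha (Finset.mem_image_of_mem α (Finset.mem_univ e))

lemma card_univ_eq_sum_fcard [Fintype E] [DecidableEq W] (α : E → W) :
    Fintype.card E = ∑ a ∈ Finset.univ.image α, fcard α a := by
  classical
  rw [← Finset.card_univ]
  have := Finset.card_eq_sum_card_fiberwise
    (f := α) (s := (Finset.univ : Finset E)) (t := Finset.univ.image α)
    (fun e _ => Finset.mem_image_of_mem α (Finset.mem_univ e))
  rw [this]
  exact Finset.sum_congr rfl fun a _ => (fcard_def α a).symm

/-- In a `k`-regular bipartite multigraph (encoded by endpoint maps `α`, `β`),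
there is a perfect matching. -/
lemma exists_perfect_matching [Fintype E] [DecidableEq E] [DecidableEq W]
    (α β : E → W) (k : ℕ) (hk : 0 < k)
    (hα : ∀ a, fcard α a = k ∨ fcard α a = 0)
    (hβ : ∀ b, fcard β b = k ∨ fcard β b = 0) :
    ∃ M : Finset E,
      (∀ e ∈ M, ∀ e' ∈ M, α e = α e' → e = e') ∧
      (∀ e ∈ M, ∀ e' ∈ M, β e = β e' → e = e') ∧
      (∀ e : E, ∃ m ∈ M, α m = α e) ∧ (∀ e : E, ∃ m ∈ M, β m = β e) := by
  classical
  set IA : Finset W := Finset.univ.image α with hIA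
  set IB : Finset W := Finset.univ.image β with hIB
  have hfullα : ∀ a ∈ IA, fcard α a = k := by
    intro a ha
    obtain ⟨e, -, rfl⟩ := Finset.mem_image.mp ha
    rcases hα (α e) with h | h
    · exact h
    · exact absurd h (by have := fcard_pos α e; omega)
  have hfullβ : ∀ b ∈ IB, fcard β b = k := by
    intro b hb
    obtain ⟨e, -, rfl⟩ := Finset.mem_image.mp hb
    rcases hβ (β e) with h | h
    · exact h
    · exact absurd h (by have := fcard_pos β e; omega)
  set t : ↥IA → Finset W := fun a => (Finset.univ.filter fun e => α e = ↑a).image β with ht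
  -- Hall's condition
  have hall : ∀ s : Finset ↥IA, s.card ≤ (s.biUnion t).card := by
    intro s
    set s' : Finset W := s.image Subtype.val with hs'
    have hcs' : s'.card = s.card := Finset.card_image_of_injective s Subtype.val_injective
    set Es : Finset E := Finset.univ.filter fun e => α e ∈ s' with hEs
    have h1 : Es.card = k * s.card := by
      have := Finset.card_eq_sum_card_fiberwise (f := α) (s := Es) (t := s')
        (fun e he => (Finset.mem_filter.mp he).2)
      rw [this, ← hcs']
      rw [Finset.card_eq_sum_ones s', Finset.mul_sum]
      refine Finset.sum_congr rfl fun a ha => ?_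
      have : Es.filter (fun e => α e = a) = Finset.univ.filter fun e => α e = a := by
        ext e
        simp only [hEs, Finset.mem_filter, Finset.mem_univ, true_and]
        constructor
        · tauto
        · rintro rfl; exact ⟨ha, rfl⟩
      rw [this, ← fcard_def]
      have haIA : a ∈ IA := by
        obtain ⟨x, -, rfl⟩ := Finset.mem_image.mp ha
        exact x.2
      rw [hfullα a haIA]; ring
    have h2 : Es.card ≤ k * (s.biUnion t).card := by
      have hmem : ∀ e ∈ Es, β e ∈ s.biUnion t := by
        intro e he
        obtain ⟨x, hx, hxe⟩ := Finset.mem_image.mp (Finset.mem_filter.mp he).2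
        refine Finset.mem_biUnion.mpr ⟨x, hx, ?_⟩
        rw [ht]
        exact Finset.mem_image_of_mem β (by simp [hxe])
      have := Finset.card_eq_sum_card_fiberwise hmem
      rw [this]
      calc ∑ b ∈ s.biUnion t, (Es.filter fun e => β e = b).card
          ≤ ∑ b ∈ s.biUnion t, k := by
            refine Finset.sum_le_sum fun b _ => ?_
            have h3 : (Es.filter fun e => β e = b).card ≤ fcard β b := by
              rw [fcard_def]
              exact Finset.card_le_card (by
                intro e he
                simp only [Finset.mem_filter, Finset.mem_univ, true_and]
                exact (Finset.mem_filter.mp he).2)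
            rcases hβ b with h | h <;> omega
        _ = k * (s.biUnion t).card := by rw [Finset.sum_const, smul_eq_mul, mul_comm]
    have := h1 ▸ h2
    exact Nat.le_of_mul_le_mul_left this hk
  obtain ⟨f, hfinj, hft⟩ := (Finset.all_card_le_biUnion_card_iff_exists_injective t).mp hall
  -- choose an edge realizing each f a
  have hchoice : ∀ a : ↥IA, ∃ e : E, α e = ↑a ∧ β e = f a := by
    intro a
    obtain ⟨e, he, hbe⟩ := Finset.mem_image.mp (hft a)
    exact ⟨e, (Finset.mem_filter.mp he).2, hbe⟩
  choose g hg1 hg2 using hchoice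
  have hginj : Function.Injective g := by
    intro a a' h
    apply Subtype.ext
    rw [← hg1 a, ← hg1 a', h]
  refine ⟨Finset.univ.image g, ?_, ?_, ?_, ?_⟩
  · rintro e he e' he' hαe
    obtain ⟨a, -, rfl⟩ := Finset.mem_image.mp he
    obtain ⟨a', -, rfl⟩ := Finset.mem_image.mp he'
    rw [hg1, hg1] at hαe
    rw [Subtype.ext hαe]
  · rintro e he e' he' hβe
    obtain ⟨a, -, rfl⟩ := Finset.mem_image.mp he
    obtain ⟨a', -, rfl⟩ := Finset.mem_image.mp he'
    rw [hg2, hg2] at hβe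
    rw [hfinj hβe]
  · intro e
    have haIA : α e ∈ IA := Finset.mem_image_of_mem α (Finset.mem_univ e)
    exact ⟨g ⟨α e, haIA⟩, Finset.mem_image_of_mem g (Finset.mem_univ _),
      hg1 ⟨α e, haIA⟩⟩
  · -- counting: the matching saturates the `β` side as well
    have hcardIAIB : IA.card = IB.card := by
      have h1 := card_univ_eq_sum_fcard α
      have h2 := card_univ_eq_sum_fcard β
      rw [Finset.sum_congr rfl (fun a ha => hfullα a ha)] at h1
      rw [Finset.sum_congr rfl (fun b hb => hfullβ b hb)] at h2
      simp only [Finset.sum_const, smul_eq_mul] at h1 h2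
      rw [← hIA, ← hIB] at *
      have : IA.card * k = IB.card * k := by omega
      exact Nat.eq_of_mul_eq_mul_right hk this
    set M : Finset E := Finset.univ.image g with hM
    have hMcard : M.card = IA.card := by
      rw [hM, Finset.card_image_of_injective _ hginj, Finset.card_univ,
        Fintype.card_coe]
    have hβM : M.image β = IB := by
      apply Finset.eq_of_subset_of_card_le
      · intro b hb
        obtain ⟨e, -, rfl⟩ := Finset.mem_image.mp hb
        exact Finset.mem_image_of_mem β (Finset.mem_univ e)
      · rw [← hcardIAIB, ← hMcard]
        apply le_of_eq
        symm
        apply Finset.card_image_of_injOn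
        intro e he e' he' hβe
        obtain ⟨a, -, rfl⟩ := Finset.mem_image.mp he
        obtain ⟨a', -, rfl⟩ := Finset.mem_image.mp he'
        rw [hg2, hg2] at hβe
        rw [hfinj hβe]
    intro e
    have : β e ∈ M.image β := hβM ▸ Finset.mem_image_of_mem β (Finset.mem_univ e)
    obtain ⟨m, hm, hme⟩ := Finset.mem_image.mp this
    exact ⟨m, hm, hme⟩
-- the fiber count after deleting a finset M of edges
lemma fcard_subtype [Fintype E] [DecidableEq E] [DecidableEq W] (M : Finset E) (α : E → W) (a : W) :
    fcard (fun e : {x : E // x ∉ M} => α ↑e) a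
      = ((Finset.univ.filter fun e => α e = a) \ M).card := by
  classical
  rw [fcard_def]
  apply Finset.card_bij (fun e _ => ↑e)
  · intro e he
    simp only [Finset.mem_filter, Finset.mem_univ, true_and] at he
    simp only [Finset.mem_sdiff, Finset.mem_filter, Finset.mem_univ, true_and]
    exact ⟨he, e.2⟩
  · intro e _ e' _ h
    exact Subtype.ext h
  · intro e he
    simp only [Finset.mem_sdiff, Finset.mem_filter, Finset.mem_univ, true_and] at he
    exact ⟨⟨e, he.2⟩, by simp [he.1], rfl⟩

/-- König edge colouring, regular case. -/
lemma exists_coloring_regular {W : Type*} [DecidableEq W] :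
    ∀ (k : ℕ) (E : Type u) [Fintype E] [DecidableEq E] (α β : E → W),
    (∀ a, fcard α a = k ∨ fcard α a = 0) → (∀ b, fcard β b = k ∨ fcard β b = 0) →
    ∃ c : E → Fin k,
      (∀ e e', e ≠ e' → α e = α e' → c e ≠ c e') ∧
      (∀ e e', e ≠ e' → β e = β e' → c e ≠ c e')
  | 0, E, _, _, α, β, hα, hβ => by
    have hE : IsEmpty E := by
      constructor
      intro e
      have := fcard_pos α e
      rcases hα (α e) with h | h <;> omega
    exact ⟨fun e => isEmptyElim e, fun e => isEmptyElim e, fun e => isEmptyElim e⟩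
  | (k+1), E, _, _, α, β, hα, hβ => by
    classical
    obtain ⟨M, hMα, hMβ, hsatα, hsatβ⟩ :=
      exists_perfect_matching α β (k+1) (Nat.succ_pos k) hα hβ
    set E₂ := {x : E // x ∉ M} with hE₂

    have key : ∀ (γ : E → W), (∀ a, fcard γ a = k + 1 ∨ fcard γ a = 0) →
        (∀ e ∈ M, ∀ e' ∈ M, γ e = γ e' → e = e') →
        (∀ e : E, ∃ m ∈ M, γ m = γ e) →
        (∀ a, fcard (fun e : E₂ => γ ↑e) a = k ∨ fcard (fun e : E₂ => γ ↑e) a = 0) := by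
      intro γ hγ hMγ hsat a
      rw [fcard_subtype]
      set F := Finset.univ.filter fun e => γ e = a with hF
      have hcount := Finset.card_inter_add_card_sdiff F M
      rcases hγ a with h | h
      · left
        have hFcard : F.card = k + 1 := by rw [hF, ← fcard_def]; exact h
        obtain ⟨e₀, he₀⟩ : F.Nonempty := by rw [← Finset.card_pos, hFcard]; omega
        have he₀a : γ e₀ = a := (Finset.mem_filter.mp he₀).2
        obtain ⟨m, hmM, hma⟩ := hsat e₀
        have hinter : F ∩ M = {m} := by
          ext x
          simp only [Finset.mem_inter, Finset.mem_singleton, hF, Finset.mem_filter,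
            Finset.mem_univ, true_and]
          constructor
          · rintro ⟨hxa, hxM⟩
            exact hMγ x hxM m hmM (by rw [hxa, hma, he₀a])
          · rintro rfl
            exact ⟨by rw [hma, he₀a], hmM⟩
        rw [hinter] at hcount
        simp only [Finset.card_singleton] at hcount
        omega
      · right
        have hFcard : F.card = 0 := by rw [hF, ← fcard_def]; exact h
        have : (F \ M).card ≤ F.card := Finset.card_le_card (Finset.sdiff_subset)
        omega
    obtain ⟨c₂, hc₂α, hc₂β⟩ := exists_coloring_regular k E₂
      (fun e : E₂ => α ↑e) (fun e : E₂ => β ↑e)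
      (key α hα hMα hsatα) (key β hβ hMβ hsatβ)
    refine ⟨fun e => if h : e ∈ M then Fin.last k else (c₂ ⟨e, h⟩).castSucc, ?_, ?_⟩
    · intro e e' hne hαe
      by_cases h : e ∈ M <;> by_cases h' : e' ∈ M <;> simp only [h, h', dif_pos, dif_neg,
        not_false_iff]
      · exact absurd (hMα e h e' h' hαe) hne
      · exact fun hcc => (Fin.castSucc_lt_last _).ne' hcc
      · exact fun hcc => (Fin.castSucc_lt_last _).ne hcc
      · intro hcc
        exact hc₂α ⟨e, h⟩ ⟨e', h'⟩ (fun hh => hne (congrArg Subtype.val hh)) hαe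
          (Fin.castSucc_injective k hcc)
    · intro e e' hne hβe
      by_cases h : e ∈ M <;> by_cases h' : e' ∈ M <;> simp only [h, h', dif_pos, dif_neg,
        not_false_iff]
      · exact absurd (hMβ e h e' h' hβe) hne
      · exact fun hcc => (Fin.castSucc_lt_last _).ne' hcc
      · exact fun hcc => (Fin.castSucc_lt_last _).ne hcc
      · intro hcc
        exact hc₂β ⟨e, h⟩ ⟨e', h'⟩ (fun hh => hne (congrArg Subtype.val hh)) hβe
          (Fin.castSucc_injective k hcc)
/-- The padding type: a dummy edge set with prescribed vertex degrees. -/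
def PadD {W : Type u} (s : Finset W) (w : W → ℕ) : Type u := Σ a : ↥s, Fin (w ↑a)

noncomputable instance {W : Type u} (s : Finset W) (w : W → ℕ) : Fintype (PadD s w) := by
  classical
  unfold PadD
  infer_instance

def padg {W : Type u} (s : Finset W) (w : W → ℕ) : PadD s w → W := fun x => ↑x.1

lemma card_padD {W : Type u} (s : Finset W) (w : W → ℕ) :
    Fintype.card (PadD s w) = ∑ a ∈ s, w a := by
  classical
  have h0 : Fintype.card (PadD s w) = Fintype.card (Σ a : ↥s, Fin (w ↑a)) :=
    Fintype.card_congr (Equiv.refl _)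
  rw [h0, Fintype.card_sigma]
  simp only [Fintype.card_fin]
  exact Finset.sum_coe_sort s w

lemma fcard_padg_mem {W : Type u} (s : Finset W) (w : W → ℕ) (a : W) (ha : a ∈ s) :
    fcard (padg s w) a = w a := by
  classical
  rw [fcard_def, ← Fintype.card_subtype]
  have eqv : {x : PadD s w // padg s w x = a} ≃ Fin (w a) :=
    { toFun := fun x => Fin.cast (congrArg w x.2) x.1.2
      invFun := fun j => ⟨⟨⟨a, ha⟩, j⟩, rfl⟩
      left_inv := by rintro ⟨⟨⟨b, hb⟩, j⟩, h⟩; subst h; rfl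
      right_inv := fun j => rfl }
  rw [Fintype.card_congr eqv, Fintype.card_fin]

lemma fcard_padg_notmem {W : Type u} (s : Finset W) (w : W → ℕ) (a : W) (ha : a ∉ s) :
    fcard (padg s w) a = 0 := by
  classical
  rw [fcard_def, Finset.card_eq_zero, Finset.filter_eq_empty_iff]
  rintro x - rfl
  exact ha x.1.2

lemma fcard_sum_elim {D : Type*} [Fintype E] [Fintype D] (f : E → W) (g : D → W) (v : W) :
    fcard (Sum.elim f g) v = fcard f v + fcard g v := by
  classical
  rw [fcard_def, fcard_def, fcard_def]
  have hdisj : Disjoint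
      ((Finset.univ.filter fun e => f e = v).map ⟨Sum.inl, Sum.inl_injective⟩)
      ((Finset.univ.filter fun d => g d = v).map ⟨Sum.inr, Sum.inr_injective⟩) := by
    simp only [Finset.disjoint_left, Finset.mem_map, Function.Embedding.coeFn_mk]
    rintro x ⟨e, -, rfl⟩ ⟨d, -, h⟩
    cases h
  have hsplit : (Finset.univ.filter fun x : E ⊕ D => Sum.elim f g x = v)
      = ((Finset.univ.filter fun e => f e = v).map ⟨Sum.inl, Sum.inl_injective⟩)
        ∪ ((Finset.univ.filter fun d => g d = v).map ⟨Sum.inr, Sum.inr_injective⟩) := by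
    ext x
    cases x <;> simp
  rw [hsplit, Finset.card_union_of_disjoint hdisj, Finset.card_map, Finset.card_map]

lemma fcard_comp_equiv {D D' : Type*} [Fintype D] [Fintype D'] (g : D → W) (eqv : D' ≃ D)
    (v : W) : fcard (g ∘ eqv) v = fcard g v := by
  classical
  rw [fcard_def, fcard_def]
  apply Finset.card_bij (fun d _ => eqv d)
  · intro d hd; simpa using (Finset.mem_filter.mp hd).2
  · intro d _ d' _ h; exact eqv.injective h
  · intro d hd
    exact ⟨eqv.symm d, by simpa using (Finset.mem_filter.mp hd).2, by simp⟩

lemma fcard_inl_comp {D : Type*} [Fintype E] (α : E → W) (a : W) :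
    fcard (fun e => (Sum.inl (α e) : W ⊕ D)) (Sum.inl a) = fcard α a := by
  classical
  rw [fcard_def, fcard_def]
  congr 1
  ext e
  simp

lemma fcard_inl_comp_inr {D : Type*} [Fintype E] (α : E → W) (n : D) :
    fcard (fun e => (Sum.inl (α e) : W ⊕ D)) (Sum.inr n) = 0 := by
  classical
  rw [fcard_def, Finset.card_eq_zero, Finset.filter_eq_empty_iff]
  intro e _
  simp


lemma mem_pad_inl {W : Type u} [DecidableEq W] (s : Finset W) (J : ℕ) (a : W) :
    Sum.inl a ∈ s.image Sum.inl ∪ (Finset.range J).image (Sum.inr : ℕ → W ⊕ ℕ) ↔ a ∈ s := by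
  simp

lemma mem_pad_inr {W : Type u} [DecidableEq W] (s : Finset W) (J : ℕ) (n : ℕ) :
    Sum.inr n ∈ s.image Sum.inl ∪ (Finset.range J).image (Sum.inr : ℕ → W ⊕ ℕ) ↔ n < J := by
  simp

lemma pad_disjoint {W : Type u} [DecidableEq W] (s : Finset W) (J : ℕ) :
    Disjoint (s.image (Sum.inl : W → W ⊕ ℕ)) ((Finset.range J).image (Sum.inr : ℕ → W ⊕ ℕ)) := by
  simp only [Finset.disjoint_left, Finset.mem_image]
  rintro x ⟨a, -, rfl⟩ ⟨n, -, h⟩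
  cases h

lemma padcard {W : Type u} {E : Type u} [Fintype E] [DecidableEq W] (γ : E → W) (k J : ℕ)
    (hγ : ∀ a, fcard γ a ≤ k) :
    Fintype.card (PadD ((Finset.univ.image γ).image (Sum.inl : W → W ⊕ ℕ)
        ∪ (Finset.range J).image Sum.inr)
        (Sum.elim (fun a => k - fcard γ a) fun _ => k)) + Fintype.card E
      = k * (Finset.univ.image γ).card + k * J := by
  classical
  rw [card_padD, Finset.sum_union (pad_disjoint _ J),
    Finset.sum_image (fun _ _ _ _ h => Sum.inl_injective h),
    Finset.sum_image (fun _ _ _ _ h => Sum.inr_injective h)]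
  simp only [Sum.elim_inl, Sum.elim_inr]
  rw [Finset.sum_const, Finset.card_range, smul_eq_mul]
  have h2 : (∑ a ∈ Finset.univ.image γ, (k - fcard γ a)) + Fintype.card E
      = k * (Finset.univ.image γ).card := by
    rw [card_univ_eq_sum_fcard γ, ← Finset.sum_add_distrib,
      Finset.sum_congr rfl (fun a _ => Nat.sub_add_cancel (hγ a)),
      Finset.sum_const, smul_eq_mul, mul_comm]
  have h3 : J * k = k * J := Nat.mul_comm J k
  omega

/-- König edge colouring for bipartite multigraphs with bounded degrees. -/
lemma exists_coloring {W : Type u} {E : Type u} [Fintype E] (α β : E → W) (k : ℕ)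
    (hα : ∀ a, fcard α a ≤ k) (hβ : ∀ b, fcard β b ≤ k) :
    ∃ c : E → Fin k,
      (∀ e e', e ≠ e' → α e = α e' → c e ≠ c e') ∧
      (∀ e e', e ≠ e' → β e = β e' → c e ≠ c e') := by
  classical
  have hc : Fintype.card (PadD ((Finset.univ.image α).image Sum.inl
        ∪ (Finset.range (Finset.univ.image β).card).image Sum.inr)
        (Sum.elim (fun a => k - fcard α a) fun _ => k))
      = Fintype.card (PadD ((Finset.univ.image β).image Sum.inl
        ∪ (Finset.range (Finset.univ.image α).card).image Sum.inr)
        (Sum.elim (fun b => k - fcard β b) fun _ => k)) := by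
    have h1 := padcard α k (Finset.univ.image β).card hα
    have h2 := padcard β k (Finset.univ.image α).card hβ
    omega
  set sA : Finset (W ⊕ ℕ) := (Finset.univ.image α).image Sum.inl
      ∪ (Finset.range (Finset.univ.image β).card).image Sum.inr with hsA
  set sB : Finset (W ⊕ ℕ) := (Finset.univ.image β).image Sum.inl
      ∪ (Finset.range (Finset.univ.image α).card).image Sum.inr with hsB
  set wA : W ⊕ ℕ → ℕ := Sum.elim (fun a => k - fcard α a) fun _ => k with hwA
  set wB : W ⊕ ℕ → ℕ := Sum.elim (fun b => k - fcard β b) fun _ => k with hwB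
  set eqv : PadD sA wA ≃ PadD sB wB := Fintype.equivOfCardEq hc with heqv
  set α' : E ⊕ PadD sA wA → W ⊕ ℕ :=
    Sum.elim (fun e => Sum.inl (α e)) (padg sA wA) with hα'
  set β' : E ⊕ PadD sA wA → W ⊕ ℕ :=
    Sum.elim (fun e => Sum.inl (β e)) (padg sB wB ∘ eqv) with hβ'
  -- regularity of the padded multigraph
  have hregα : ∀ v, fcard α' v = k ∨ fcard α' v = 0 := by
    intro v
    rw [hα', fcard_sum_elim]
    cases v with
    | inl a =>
      rw [fcard_inl_comp]
      by_cases ha : a ∈ Finset.univ.image α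
      · left
        have hmem : Sum.inl a ∈ sA :=
          Finset.mem_union_left _ (Finset.mem_image_of_mem Sum.inl ha)
        rw [fcard_padg_mem sA wA _ hmem, hwA]
        simp only [Sum.elim_inl]
        exact Nat.add_sub_cancel' (hα a)
      · right
        have hmem : Sum.inl a ∉ sA := by
          rw [hsA, mem_pad_inl]; exact ha
        rw [fcard_padg_notmem sA wA _ hmem, fcard_eq_zero_of_notmem_image α a ha]
    | inr n =>
      rw [fcard_inl_comp_inr]
      by_cases hn : n < (Finset.univ.image β).card
      · left
        have hmem : Sum.inr n ∈ sA := Finset.mem_union_right _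
          (Finset.mem_image_of_mem Sum.inr (Finset.mem_range.mpr hn))
        rw [fcard_padg_mem sA wA _ hmem, hwA]
        simp
      · right
        have hmem : Sum.inr n ∉ sA := by
          rw [hsA, mem_pad_inr]; exact hn
        rw [fcard_padg_notmem sA wA _ hmem]
  have hregβ : ∀ v, fcard β' v = k ∨ fcard β' v = 0 := by
    intro v
    rw [hβ', fcard_sum_elim, fcard_comp_equiv]
    cases v with
    | inl b =>
      rw [fcard_inl_comp]
      by_cases hb : b ∈ Finset.univ.image β
      · left
        have hmem : Sum.inl b ∈ sB :=
          Finset.mem_union_left _ (Finset.mem_image_of_mem Sum.inl hb)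
        rw [fcard_padg_mem sB wB _ hmem, hwB]
        simp only [Sum.elim_inl]
        exact Nat.add_sub_cancel' (hβ b)
      · right
        have hmem : Sum.inl b ∉ sB := by
          rw [hsB, mem_pad_inl]; exact hb
        rw [fcard_padg_notmem sB wB _ hmem, fcard_eq_zero_of_notmem_image β b hb]
    | inr n =>
      rw [fcard_inl_comp_inr]
      by_cases hn : n < (Finset.univ.image α).card
      · left
        have hmem : Sum.inr n ∈ sB := Finset.mem_union_right _
          (Finset.mem_image_of_mem Sum.inr (Finset.mem_range.mpr hn))
        rw [fcard_padg_mem sB wB _ hmem, hwB]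
        simp
      · right
        have hmem : Sum.inr n ∉ sB := by
          rw [hsB, mem_pad_inr]; exact hn
        rw [fcard_padg_notmem sB wB _ hmem]
  obtain ⟨c', hc'α, hc'β⟩ := exists_coloring_regular k (E ⊕ PadD sA wA) α' β' hregα hregβ
  refine ⟨fun e => c' (Sum.inl e), ?_, ?_⟩
  · intro e e' hne h
    exact hc'α (Sum.inl e) (Sum.inl e') (fun hh => hne (Sum.inl_injective hh))
      (congrArg (fun x => (Sum.inl x : W ⊕ ℕ)) h)
  · intro e e' hne h
    exact hc'β (Sum.inl e) (Sum.inl e') (fun hh => hne (Sum.inl_injective hh))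
      (congrArg (fun x => (Sum.inl x : W ⊕ ℕ)) h)

end Aux

lemma two_neighbors_of_cycle {H : SimpleGraph V} {u : V} {c : H.Walk u u}
    (hc : c.IsCycle) : ∃ x y, H.Adj u x ∧ H.Adj u y ∧ x ≠ y := by
  cases c with
  | nil => exact absurd hc Walk.IsCycle.not_of_nil
  | @cons _ w _ h p =>
    have hpnil : p.darts ≠ [] := by
      cases p with
      | nil => exact absurd h (H.irrefl)
      | cons h' q => simp [Walk.darts_cons]
    set d := p.darts.getLast hpnil with hd
    have hd2 : d.snd = u := by rw [hd, Walk.getLast_darts_eq_lastDart]; rfl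
    refine ⟨w, d.fst, h, ?_, ?_⟩
    · have hadj := d.adj
      rw [hd2] at hadj
      exact hadj.symm
    · intro hwd
      have hmem : d ∈ p.darts := List.getLast_mem hpnil
      have hedge : d.edge ∈ p.edges := List.mem_map_of_mem (f := Dart.edge) hmem
      have heq : d.edge = s(u, w) := by
        show s(d.fst, d.snd) = s(u, w)
        rw [hd2, ← hwd, Sym2.eq_swap]
      have hnodup := hc.isTrail.edges_nodup
      rw [Walk.edges_cons] at hnodup
      exact (List.nodup_cons.mp hnodup).1 (heq ▸ hedge)

lemma isAcyclic_of_deg_le_one [Fintype V] (H : SimpleGraph V) (A : Set V)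
    (hadj : ∀ u v, H.Adj u v → u ∈ A ∨ v ∈ A)
    (hdeg : ∀ a ∈ A, deg H a ≤ 1) : H.IsAcyclic := by
  classical
  intro v c hc
  -- find a vertex of the cycle lying in A
  have hv : ∃ u ∈ c.support, u ∈ A := by
    cases c with
    | nil => exact absurd hc Walk.IsCycle.not_of_nil
    | @cons _ w _ h p =>
      rcases hadj _ _ h with hA | hA
      · exact ⟨v, Walk.start_mem_support _, hA⟩
      · exact ⟨w, by
          rw [Walk.support_cons]
          exact List.mem_cons_of_mem _ (Walk.start_mem_support p), hA⟩
  obtain ⟨u, hu, huA⟩ := hv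
  obtain ⟨x, y, hx, hy, hxy⟩ := two_neighbors_of_cycle (hc.rotate hu)
  have h2 : 1 < (H.neighborSet u).ncard :=
    (Set.one_lt_ncard_iff (Set.toFinite _)).mpr ⟨x, y, hx, hy, hxy⟩
  have h3 : deg H u ≤ 1 := hdeg u huA
  rw [deg] at h3
  omega

/-- a bipartite graph with parts `A, B`, maximum degree at most
`2k`, in which every vertex of `A` has degree at most `k`, decomposes into `k`
linear forests in each of which every `A`-vertex has degree at most 1 and every
`B`-vertex degree at most 2. -/
theorem bipartite_decomposition_into_k_linear_forests [Fintype V]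
    (G : SimpleGraph V) (A B : Set V) (hbip : IsBipartition G A B)
    (k : ℕ) (hk : 1 ≤ k)
    (hmax : ∀ v, deg G v ≤ 2 * k)
    (hA : ∀ a ∈ A, deg G a ≤ k) :
    ∃ F : Fin k → SimpleGraph V,
      (∀ i, F i ≤ G ∧ IsLinearForest (F i) ∧
        (∀ a ∈ A, deg (F i) a ≤ 1) ∧ (∀ b ∈ B, deg (F i) b ≤ 2)) ∧
      (∀ i j, i ≠ j → Disjoint (F i).edgeSet (F j).edgeSet) ∧
      (⋃ i, (F i).edgeSet) = G.edgeSet := by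
  classical
  obtain ⟨hdisj, hcover, hedge⟩ := hbip
  haveI : Fintype ↥G.edgeSet := (Set.toFinite G.edgeSet).fintype
  -- choose an `A`-endpoint and a `B`-endpoint for every edge
  have hsplit : ∀ e : ↥G.edgeSet, ∃ x y : V,
      (e : Sym2 V) = s(x, y) ∧ x ∈ A ∧ y ∈ B := by
    rintro ⟨e, he⟩
    obtain ⟨⟨u, v⟩, rfl⟩ := Quot.exists_rep e
    have hadj : G.Adj u v := he
    rcases hedge u v hadj with ⟨hu, hv⟩ | ⟨hu, hv⟩
    · exact ⟨u, v, rfl, hu, hv⟩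
    · exact ⟨v, u, Sym2.eq_swap, hv, hu⟩
  choose a b hp hpA hpB using hsplit
  have hadjab : ∀ e, G.Adj (a e) (b e) := by
    intro e
    have := e.2
    rw [hp e] at this
    exact this
  have hinj : ∀ e e' : ↥G.edgeSet, s(a e, b e) = s(a e', b e') → e = e' := by
    intro e e' h
    apply Subtype.ext
    rw [hp e, hp e', h]
  have hmemA : ∀ (e : ↥G.edgeSet) (v : V), v ∈ A → (v ∈ (e : Sym2 V) ↔ a e = v) := by
    intro e v hv
    constructor
    · intro hmem
      rw [hp e, Sym2.mem_iff] at hmem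
      rcases hmem with rfl | rfl
      · rfl
      · exact absurd (hpB e) (fun hB => Set.disjoint_left.mp hdisj hv hB)
    · rintro rfl
      rw [hp e]
      exact Sym2.mem_mk_left _ _
  have hmemB : ∀ (e : ↥G.edgeSet) (v : V), v ∈ B → (v ∈ (e : Sym2 V) ↔ b e = v) := by
    intro e v hv
    constructor
    · intro hmem
      rw [hp e, Sym2.mem_iff] at hmem
      rcases hmem with rfl | rfl
      · exact absurd (hpA e) (fun hA' => Set.disjoint_left.mp hdisj hA' hv)
      · rfl
    · rintro rfl
      rw [hp e]
      exact Sym2.mem_mk_right _ _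
  -- fibers of `a`, `b` compute degrees
  have hfibA : ∀ v ∈ A, fcard a v = deg G v := by
    intro v hv
    rw [fcard_def, deg, Set.ncard_eq_toFinset_card']
    apply Finset.card_bij (fun e _ => b e)
    · intro e he
      simp only [Finset.mem_filter] at he
      rw [Set.mem_toFinset, mem_neighborSet]
      rw [← he.2]
      exact hadjab e
    · intro e he e' he' hbe
      simp only [Finset.mem_filter] at he he'
      exact hinj e e' (by rw [he.2, he'.2, hbe])
    · intro u hu
      rw [Set.mem_toFinset, mem_neighborSet] at hu
      refine ⟨⟨s(v, u), hu⟩, ?_, ?_⟩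
      · simp only [Finset.mem_filter, Finset.mem_univ, true_and]
        exact (hmemA _ v hv).mp (Sym2.mem_mk_left _ _)
      · have hav : a ⟨s(v, u), hu⟩ = v := (hmemA _ v hv).mp (Sym2.mem_mk_left _ _)
        have h5 := hp ⟨s(v, u), hu⟩
        rw [hav] at h5
        exact (Sym2.congr_right.mp h5.symm)
  have hfibB : ∀ v ∈ B, fcard b v = deg G v := by
    intro v hv
    rw [fcard_def, deg, Set.ncard_eq_toFinset_card']
    apply Finset.card_bij (fun e _ => a e)
    · intro e he
      simp only [Finset.mem_filter] at he
      rw [Set.mem_toFinset, mem_neighborSet]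
      rw [← he.2]
      exact (hadjab e).symm
    · intro e he e' he' hae
      simp only [Finset.mem_filter] at he he'
      exact hinj e e' (by rw [he.2, he'.2, hae])
    · intro u hu
      rw [Set.mem_toFinset, mem_neighborSet] at hu
      have hu' : G.Adj u v := hu.symm
      refine ⟨⟨s(u, v), hu'⟩, ?_, ?_⟩
      · simp only [Finset.mem_filter, Finset.mem_univ, true_and]
        exact (hmemB _ v hv).mp (Sym2.mem_mk_right _ _)
      · have hbv : b ⟨s(u, v), hu'⟩ = v := (hmemB _ v hv).mp (Sym2.mem_mk_right _ _)
        have h5 := hp ⟨s(u, v), hu'⟩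
        rw [hbv] at h5
        exact (Sym2.congr_left.mp h5.symm)
  have hfibA0 : ∀ v : V, v ∉ A → fcard a v = 0 := by
    intro v hv
    rw [fcard_def, Finset.card_eq_zero, Finset.filter_eq_empty_iff]
    rintro e - h
    exact hv (h ▸ hpA e)
  have hfibB0 : ∀ v : V, v ∉ B → fcard b v = 0 := by
    intro v hv
    rw [fcard_def, Finset.card_eq_zero, Finset.filter_eq_empty_iff]
    rintro e - h
    exact hv (h ▸ hpB e)
  have hbndA : ∀ v : V, fcard a v ≤ k := by
    intro v
    by_cases hv : v ∈ A
    · rw [hfibA v hv]; exact hA v hv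
    · rw [hfibA0 v hv]; omega
  have hbndB : ∀ v : V, fcard b v ≤ 2 * k := by
    intro v
    by_cases hv : v ∈ B
    · rw [hfibB v hv]; exact hmax v
    · rw [hfibB0 v hv]; omega
  -- split each `B`-vertex in two using an ordering of the edges
  set ord : ↥G.edgeSet → ℕ := fun e => (Fintype.equivFin ↥G.edgeSet e : ℕ) with hord
  have hordinj : Function.Injective ord := fun e e' h =>
    (Fintype.equivFin ↥G.edgeSet).injective (Fin.ext h)
  set idx : ↥G.edgeSet → ℕ :=
    fun e => (Finset.univ.filter fun x => b x = b e ∧ ord x < ord e).card with hidx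
  have hidxlt : ∀ e, idx e < fcard b (b e) := by
    intro e
    rw [hidx, fcard_def]
    apply Finset.card_lt_card
    constructor
    · intro x hx
      simp only [Finset.mem_filter] at hx ⊢
      exact ⟨hx.1, hx.2.1⟩
    · intro hsub
      have he : e ∈ Finset.univ.filter fun x => b x = b e := by simp
      have := hsub he
      simp only [Finset.mem_filter] at this
      omega
  have hidxinj : ∀ e e', b e = b e' → idx e = idx e' → e = e' := by
    intro e e' hbe hie
    rcases lt_trichotomy (ord e) (ord e') with h | h | h
    · exfalso
      have : idx e < idx e' := by
        rw [hidx]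
        apply Finset.card_lt_card
        constructor
        · intro x hx
          simp only [Finset.mem_filter] at hx ⊢
          exact ⟨hx.1, hx.2.1.trans hbe, hx.2.2.trans h⟩
        · intro hsub
          have he : e ∈ Finset.univ.filter fun x => b x = b e' ∧ ord x < ord e' := by
            simp only [Finset.mem_filter, Finset.mem_univ, true_and]
            exact ⟨hbe, h⟩
          have := hsub he
          simp only [Finset.mem_filter] at this
          omega
      omega
    · exact hordinj h
    · exfalso
      have : idx e' < idx e := by
        rw [hidx]
        apply Finset.card_lt_card
        constructor
        · intro x hx
          simp only [Finset.mem_filter] at hx ⊢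
          exact ⟨hx.1, hx.2.1.trans hbe.symm, hx.2.2.trans h⟩
        · intro hsub
          have he : e' ∈ Finset.univ.filter fun x => b x = b e ∧ ord x < ord e := by
            simp only [Finset.mem_filter, Finset.mem_univ, true_and]
            exact ⟨hbe.symm, h⟩
          have := hsub he
          simp only [Finset.mem_filter] at this
          omega
      omega
  set α' : ↥G.edgeSet → V × Bool := fun e => (a e, true) with hα'
  set β' : ↥G.edgeSet → V × Bool := fun e => (b e, decide (idx e < k)) with hβ'
  have hbndα' : ∀ w : V × Bool, fcard α' w ≤ k := by
    rintro ⟨v, t⟩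
    cases t with
    | true =>
      have : fcard α' (v, true) = fcard a v := by
        rw [fcard_def, fcard_def]
        congr 1
        ext e
        simp [hα', Prod.ext_iff]
      rw [this]; exact hbndA v
    | false =>
      have : fcard α' (v, false) = 0 := by
        rw [fcard_def, Finset.card_eq_zero, Finset.filter_eq_empty_iff]
        rintro e -
        simp [hα']
      rw [this]; omega
  have hbndβ' : ∀ w : V × Bool, fcard β' w ≤ k := by
    rintro ⟨v, t⟩
    rw [fcard_def]
    have hfeq : (Finset.univ.filter fun e => β' e = (v, t))
        = (Finset.univ.filter fun e => b e = v ∧ decide (idx e < k) = t) := by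
      ext e
      simp [hβ', Prod.ext_iff]
    rw [hfeq]
    cases t with
    | true =>
      apply le_trans (Finset.card_le_card_of_injOn idx ?_ ?_) (le_of_eq (Finset.card_range k))
      · intro e he
        simp only [Finset.mem_coe, Finset.mem_filter, decide_eq_true_iff] at he
        rw [Finset.mem_coe, Finset.mem_range]
        exact he.2.2
      · intro e he e' he' hie
        simp only [Finset.mem_coe, Finset.mem_filter] at he he'
        exact hidxinj e e' (he.2.1.trans he'.2.1.symm) hie
    | false =>
      have hico : ((Finset.Ico k (2 * k)).card = k) := by
        rw [Nat.card_Ico]; omega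
      apply le_trans (Finset.card_le_card_of_injOn idx ?_ ?_) (le_of_eq hico)
      · intro e he
        simp only [Finset.mem_coe, Finset.mem_filter, decide_eq_false_iff_not] at he
        have h2 : idx e < 2 * k := by
          have h3 := hidxlt e
          have h4 := hbndB (b e)
          omega
        rw [Finset.mem_coe, Finset.mem_Ico]
        exact ⟨Nat.le_of_not_lt he.2.2, h2⟩
      · intro e he e' he' hie
        simp only [Finset.mem_coe, Finset.mem_filter] at he he'
        exact hidxinj e e' (he.2.1.trans he'.2.1.symm) hie
  -- the colouring
  obtain ⟨c, hcα, hcβ⟩ := exists_coloring α' β' k hbndα' hbndβ'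
  set F : Fin k → SimpleGraph V :=
    fun i => SimpleGraph.fromEdgeSet (Subtype.val '' {e : ↥G.edgeSet | c e = i}) with hF
  have hFG : ∀ i, F i ≤ G := by
    intro i
    have hsub : (Subtype.val '' {e : ↥G.edgeSet | c e = i}) ⊆ G.edgeSet := by
      rintro x ⟨e, -, rfl⟩
      exact e.2
    calc F i ≤ SimpleGraph.fromEdgeSet G.edgeSet := SimpleGraph.fromEdgeSet_mono hsub
      _ = G := SimpleGraph.fromEdgeSet_edgeSet G
  have hFedge : ∀ i, (F i).edgeSet = Subtype.val '' {e : ↥G.edgeSet | c e = i} := by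
    intro i
    rw [hF, SimpleGraph.edgeSet_fromEdgeSet]
    rw [_root_.sdiff_eq_self_iff_disjoint]
    rw [Set.disjoint_left]
    rintro x hdiag ⟨e, -, rfl⟩
    exact G.not_isDiag_of_mem_edgeSet e.2 hdiag
  have hFadj : ∀ i u v, (F i).Adj u v ↔
      (∃ e : ↥G.edgeSet, c e = i ∧ (e : Sym2 V) = s(u, v)) ∧ u ≠ v := by
    intro i u v
    rw [hF, SimpleGraph.fromEdgeSet_adj]
    constructor
    · rintro ⟨⟨e, hce, hee⟩, hne⟩
      exact ⟨⟨e, hce, hee⟩, hne⟩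
    · rintro ⟨⟨e, hce, hee⟩, hne⟩
      exact ⟨⟨e, hce, hee⟩, hne⟩
  have hdegA : ∀ (i) (v), v ∈ A → deg (F i) v ≤ 1 := by
    intro i v hv
    rw [deg]
    rw [Set.ncard_le_one (Set.toFinite _)]
    intro x hx y hy
    rw [mem_neighborSet, hFadj] at hx hy
    obtain ⟨⟨e, hce, hee⟩, hnex⟩ := hx
    obtain ⟨⟨e', hce', hee'⟩, hney⟩ := hy
    have hae : a e = v := (hmemA e v hv).mp (by rw [hee]; exact Sym2.mem_mk_left _ _)
    have hae' : a e' = v := (hmemA e' v hv).mp (by rw [hee']; exact Sym2.mem_mk_left _ _)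
    have heq : e = e' := by
      by_contra hne
      exact hcα e e' hne (by simp only [hα']; rw [hae, hae']) (hce.trans hce'.symm)
    have : s(v, x) = s(v, y) := by rw [← hee, heq, hee']
    exact Sym2.congr_right.mp this
  have hdegB : ∀ (i) (v), v ∈ B → deg (F i) v ≤ 2 := by
    intro i v hv
    rw [deg]
    by_contra hcon
    push_neg at hcon
    rw [show (2 : ℕ) < (SimpleGraph.neighborSet (F i) v).ncard ↔
        2 < (SimpleGraph.neighborSet (F i) v).ncard from Iff.rfl] at hcon
    obtain ⟨x, hx, y, hy, z, hz, hxy, hxz, hyz⟩ :=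
      (Set.two_lt_ncard (Set.toFinite _)).mp hcon
    rw [mem_neighborSet, hFadj] at hx hy hz
    obtain ⟨⟨e1, hc1, he1⟩, -⟩ := hx
    obtain ⟨⟨e2, hc2, he2⟩, -⟩ := hy
    obtain ⟨⟨e3, hc3, he3⟩, -⟩ := hz
    have hb1 : b e1 = v := (hmemB e1 v hv).mp (by rw [he1]; exact Sym2.mem_mk_left _ _)
    have hb2 : b e2 = v := (hmemB e2 v hv).mp (by rw [he2]; exact Sym2.mem_mk_left _ _)
    have hb3 : b e3 = v := (hmemB e3 v hv).mp (by rw [he3]; exact Sym2.mem_mk_left _ _)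
    have hne12 : e1 ≠ e2 := by
      intro h; apply hxy
      have : s(v, x) = s(v, y) := by rw [← he1, h, he2]
      exact Sym2.congr_right.mp this
    have hne13 : e1 ≠ e3 := by
      intro h; apply hxz
      have : s(v, x) = s(v, z) := by rw [← he1, h, he3]
      exact Sym2.congr_right.mp this
    have hne23 : e2 ≠ e3 := by
      intro h; apply hyz
      have : s(v, y) = s(v, z) := by rw [← he2, h, he3]
      exact Sym2.congr_right.mp this
    have hpair : ∀ e e' : ↥G.edgeSet, e ≠ e' → c e = i → c e' = i →
        decide (idx e < k) = decide (idx e' < k) → b e = v → b e' = v → False := by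
      intro e e' hne hce hce' ht hbe hbe'
      exact hcβ e e' hne (by simp only [hβ']; rw [hbe, hbe', ht]) (hce.trans hce'.symm)
    have tri : ∀ p q r : Bool, p = q ∨ p = r ∨ q = r := by decide
    rcases tri (decide (idx e1 < k)) (decide (idx e2 < k)) (decide (idx e3 < k)) with
      h | h | h
    · exact hpair e1 e2 hne12 hc1 hc2 h hb1 hb2
    · exact hpair e1 e3 hne13 hc1 hc3 h hb1 hb3
    · exact hpair e2 e3 hne23 hc2 hc3 h hb2 hb3
  refine ⟨F, ?_, ?_, ?_⟩
  · intro i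
    refine ⟨hFG i, ⟨?_, ?_⟩, fun v hv => hdegA i v hv, fun v hv => hdegB i v hv⟩
    · apply isAcyclic_of_deg_le_one (F i) A ?_ (fun v hv => hdegA i v hv)
      intro u v huv
      have : G.Adj u v := hFG i huv
      rcases hedge u v this with ⟨h1, -⟩ | ⟨-, h2⟩
      · exact Or.inl h1
      · exact Or.inr h2
    · intro v
      have hv : v ∈ A ∪ B := by rw [hcover]; exact Set.mem_univ v
      rcases hv with hv | hv
      · exact le_trans (hdegA i v hv) (by omega)
      · exact hdegB i v hv
  · intro i j hij
    rw [Set.disjoint_left, hFedge i, hFedge j]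
    rintro x ⟨e, hce, rfl⟩ ⟨e', hce', hee'⟩
    have : e = e' := Subtype.val_injective hee'.symm
    rw [← this] at hce'
    exact hij (hce ▸ hce' ▸ rfl)
  · apply Set.eq_of_subset_of_subset
    · intro x hx
      rw [Set.mem_iUnion] at hx
      obtain ⟨i, hi⟩ := hx
      rw [hFedge i] at hi
      obtain ⟨e, -, rfl⟩ := hi
      exact e.2
    · intro x hx
      rw [Set.mem_iUnion]
      refine ⟨c ⟨x, hx⟩, ?_⟩
      rw [hFedge]
      exact ⟨⟨x, hx⟩, rfl, rfl⟩

end Paper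
end

section
/- Let G be a graph on n vertices such that between every two disjoint vertex sets of size at least s there is an edge of G. Then any linear forest F in G with more than s path components can be extended, by adding edges of G between endpoints of distinct components, to a linear forest on the same vertex set with at most s components. -/
open SimpleGraph Set

namespace Paper

variable {V : Type*}

/-!
Every nontrivial component of the acyclic graph `F` is a tree, hence has two leaves. If `F` has
more than `s` nontrivial components, take two disjoint families of `⌊(s + 1) / 2⌋` of them; their
leaves form two disjoint sets of at least `s` vertices, so `G` joins leaves `x`, `y` of distinct
components. Adding the edge `xy` keeps `F` a linear forest on the same support and merges two
components, so iterating brings the number of components down to `s`.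
-/

open Function

lemma deg_eq_degree_toSimpleGraph {F : SimpleGraph V} (c : F.ConnectedComponent) (v : c.supp)
    [Fintype (c.toSimpleGraph.neighborSet v)] : deg F v = c.toSimpleGraph.degree v := by
  have hnbr : F.neighborSet v = Subtype.val '' c.toSimpleGraph.neighborSet v := by
    ext w
    refine ⟨fun hw => ⟨⟨w, c.mem_supp_of_adj_mem_supp v.2 hw⟩, ?_, rfl⟩, ?_⟩
    · simpa [ConnectedComponent.toSimpleGraph] using hw
    · rintro ⟨w, hw, rfl⟩
      simpa [ConnectedComponent.toSimpleGraph] using hw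
  rw [deg, hnbr, Set.ncard_image_of_injective _ Subtype.val_injective,
    ← card_neighborSet_eq_degree, Set.ncard_eq_toFinset_card', Set.toFinset_card]

lemma IsAcyclic.exists_ne_deg_eq_one_of_mem_supp [Finite V] {F : SimpleGraph V}
    (hF : F.IsAcyclic) {c : F.ConnectedComponent} {u : V} (hu : u ∈ F.support)
    (huc : u ∈ c.supp) : ∃ a ∈ c.supp, ∃ b ∈ c.supp, a ≠ b ∧ deg F a = 1 ∧ deg F b = 1 := by
  classical
  have := Fintype.ofFinite V
  obtain ⟨w, huw⟩ := hu
  have : Nontrivial c.supp :=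
    ⟨⟨u, huc⟩, ⟨w, c.mem_supp_of_adj_mem_supp huc huw⟩, fun h => huw.ne (congrArg Subtype.val h)⟩
  obtain ⟨a, b, hab, ha, hb⟩ := (hF.isTree_connectedComponent c).exists_ne_and_degree_eq_one
  exact ⟨a, a.2, b, b.2, Subtype.val_injective.ne hab,
    by rwa [deg_eq_degree_toSimpleGraph], by rwa [deg_eq_degree_toSimpleGraph]⟩

lemma deg_sup_edge_le (F : SimpleGraph V) (x y v : V) : deg (F ⊔ edge x y) v ≤ deg F v + 1 := by
  have hsub : ((edge x y).neighborSet v).Subsingleton := by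
    intro a ha b hb
    simp only [mem_neighborSet, edge_adj] at ha hb
    grind
  calc deg (F ⊔ edge x y) v ≤ deg F v + ((edge x y).neighborSet v).ncard := by
        rw [deg, neighborSet_sup]; exact Set.ncard_union_le _ _
    _ ≤ deg F v + 1 := by gcongr; exact (Set.ncard_le_one hsub.finite).2 fun a ha b hb => hsub ha hb

lemma neighborSet_sup_edge_of_ne (F : SimpleGraph V) {x y v : V} (hx : v ≠ x) (hy : v ≠ y) :
    (F ⊔ edge x y).neighborSet v = F.neighborSet v := by
  ext w
  simp [edge_adj, hx, hy]

lemma IsLinearForest.sup_edge_s18 {F : SimpleGraph V} (hF : IsLinearForest F) {x y : V}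
    (hxy : ¬F.Reachable x y) (hx : deg F x = 1) (hy : deg F y = 1) :
    IsLinearForest (F ⊔ edge x y) := by
  refine ⟨hF.1.sup_edge_of_not_reachable hxy, fun v => ?_⟩
  by_cases hv : v = x ∨ v = y
  · have h1 : deg F v = 1 := by rcases hv with rfl | rfl <;> assumption
    have := deg_sup_edge_le F x y v
    omega
  · push Not at hv
    rw [deg, neighborSet_sup_edge_of_ne F hv.1 hv.2]
    exact hF.2 v

lemma support_sup_edge {F : SimpleGraph V} {x y : V} (hx : x ∈ F.support) (hy : y ∈ F.support) :
    (F ⊔ edge x y).support = F.support := by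
  refine (support_mono le_sup_left).antisymm' fun v ⟨w, hvw⟩ => ?_
  rcases hvw with hvw | hvw
  · exact ⟨w, hvw⟩
  · rcases ((edge_adj ..).1 hvw).1 with ⟨rfl, -⟩ | ⟨rfl, -⟩
    exacts [hx, hy]

lemma mem_support_of_deg_eq_one {F : SimpleGraph V} {v : V} (hv : deg F v = 1) :
    v ∈ F.support := by
  obtain ⟨w, hw⟩ := Set.nonempty_of_ncard_ne_zero (s := F.neighborSet v) (by rw [← deg]; omega)
  exact ⟨w, hw⟩

lemma numComponents_lt_of_le [Finite V] {F F' : SimpleGraph V} (hle : F ≤ F')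
    (hsupp : F'.support ⊆ F.support) {x y : V} (hx : x ∈ F.support) (hy : y ∈ F.support)
    (hxy : ¬F.Reachable x y) (hxy' : F'.Reachable x y) :
    numComponents F' < numComponents F := by
  have := Fintype.ofFinite {c : F.ConnectedComponent // (F.support ∩ c.supp).Nonempty}
  have := Fintype.ofFinite {c : F'.ConnectedComponent // (F'.support ∩ c.supp).Nonempty}
  let φ := Hom.ofLE hle
  have hmap (v : V) : (F.connectedComponentMk v).map φ = F'.connectedComponentMk v := rfl
  let g : {c : F.ConnectedComponent // (F.support ∩ c.supp).Nonempty} →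
      {c : F'.ConnectedComponent // (F'.support ∩ c.supp).Nonempty} := fun c =>
    ⟨c.1.map φ, by
      obtain ⟨w, hw, hwc⟩ := c.2
      refine ⟨w, support_mono hle hw, ?_⟩
      rw [ConnectedComponent.mem_supp_iff] at hwc ⊢
      rw [← hwc, hmap]⟩
  have hg (v : V) (hv : v ∈ F.support) :
      g ⟨F.connectedComponentMk v, v, hv, rfl⟩ =
        ⟨F'.connectedComponentMk v, v, support_mono hle hv, rfl⟩ := rfl
  have hsurj : Surjective g := by
    rintro ⟨c', w, hw, rfl⟩
    exact ⟨_, hg w (hsupp hw)⟩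
  have hninj : ¬Injective g := fun hinj =>
    hxy <| ConnectedComponent.exact <| congrArg Subtype.val <|
      @hinj ⟨_, x, hx, rfl⟩ ⟨_, y, hy, rfl⟩ <| by
        rw [hg x hx, hg y hy]; exact Subtype.ext (ConnectedComponent.sound hxy')
  simpa only [numComponents, Nat.card_eq_fintype_card] using
    Fintype.card_lt_of_surjective_not_injective g hsurj hninj

lemma exists_adj_of_pairwise_disjoint {ι : Type*} [Finite ι] {G : SimpleGraph V} {s : ℕ}
    (hG : ∀ X Y : Set V, Disjoint X Y → s ≤ X.ncard → s ≤ Y.ncard →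
      ∃ x ∈ X, ∃ y ∈ Y, G.Adj x y)
    (P : ι → Finset V) (hP : Pairwise (Disjoint on P)) (hP₂ : ∀ i, 2 ≤ (P i).card)
    (hs : s < Nat.card ι) : ∃ i j, i ≠ j ∧ ∃ x ∈ P i, ∃ y ∈ P j, G.Adj x y := by
  classical
  have := Fintype.ofFinite ι
  rw [Nat.card_eq_fintype_card] at hs
  obtain ⟨t₁, -, ht₁⟩ := Finset.exists_subset_card_eq (s := (Finset.univ : Finset ι))
    (n := (s + 1) / 2) (by rw [Finset.card_univ]; omega)
  obtain ⟨t₂, ht₂, ht₂'⟩ := Finset.exists_subset_card_eq (s := (t₁ᶜ : Finset ι))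
    (n := (s + 1) / 2) (by rw [Finset.card_compl]; omega)
  have hlarge (t : Finset ι) (ht : t.card = (s + 1) / 2) : s ≤ (↑(t.biUnion P) : Set V).ncard := by
    rw [Set.ncard_coe_finset, Finset.card_biUnion (hP.set_pairwise _)]
    calc s ≤ ∑ _ ∈ t, 2 := by rw [Finset.sum_const, ht, smul_eq_mul]; omega
      _ ≤ ∑ i ∈ t, (P i).card := Finset.sum_le_sum fun i _ => hP₂ i
  have hdisj : Disjoint (↑(t₁.biUnion P) : Set V) ↑(t₂.biUnion P) := by
    rw [Finset.disjoint_coe, Finset.disjoint_biUnion_left]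
    intro i hi
    rw [Finset.disjoint_biUnion_right]
    intro j hj
    exact hP fun h => Finset.mem_compl.1 (ht₂ hj) (h ▸ hi)
  obtain ⟨x, hx, y, hy, hxy⟩ := hG _ _ hdisj (hlarge t₁ ht₁) (hlarge t₂ ht₂')
  simp only [Finset.coe_biUnion, Set.mem_iUnion, Finset.mem_coe] at hx hy
  obtain ⟨i, hi, hxi⟩ := hx
  obtain ⟨j, hj, hyj⟩ := hy
  exact ⟨i, j, fun h => Finset.mem_compl.1 (ht₂ hj) (h ▸ hi), x, hxi, y, hyj, hxy⟩

lemma IsAcyclic.exists_adj_leaves_not_reachable [Finite V] {F G : SimpleGraph V} {s : ℕ}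
    (hG : ∀ X Y : Set V, Disjoint X Y → s ≤ X.ncard → s ≤ Y.ncard →
      ∃ x ∈ X, ∃ y ∈ Y, G.Adj x y)
    (hF : F.IsAcyclic) (hs : s < numComponents F) :
    ∃ x y, G.Adj x y ∧ ¬F.Reachable x y ∧ deg F x = 1 ∧ deg F y = 1 := by
  classical
  have := Fintype.ofFinite V
  let P (c : {c : F.ConnectedComponent // (F.support ∩ c.supp).Nonempty}) : Finset V :=
    {v | v ∈ c.1.supp ∧ deg F v = 1}
  have hP : Pairwise (Disjoint on P) := fun c d hcd =>
    Finset.disjoint_filter.2 fun v _ hc hd =>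
      F.pairwise_disjoint_supp_connectedComponent (Subtype.coe_injective.ne hcd)
        |>.ne_of_mem hc.1 hd.1 rfl
  have hP₂ (c) : 2 ≤ (P c).card := by
    obtain ⟨u, hu, huc⟩ := c.2
    obtain ⟨a, ha, b, hb, hab, ha₁, hb₁⟩ := IsAcyclic.exists_ne_deg_eq_one_of_mem_supp hF hu huc
    calc 2 = ({a, b} : Finset V).card := (Finset.card_pair hab).symm
      _ ≤ (P c).card := Finset.card_le_card <| by
          simp only [P, Finset.insert_subset_iff, Finset.singleton_subset_iff, Finset.mem_filter,
            Finset.mem_univ, true_and]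
          exact ⟨⟨ha, ha₁⟩, hb, hb₁⟩
  obtain ⟨c, d, hcd, x, hx, y, hy, hxy⟩ := exists_adj_of_pairwise_disjoint hG P hP hP₂ hs
  simp only [P, Finset.mem_filter, Finset.mem_univ, true_and] at hx hy
  refine ⟨x, y, hxy, fun hr => hcd (Subtype.ext ?_), hx.2, hy.2⟩
  rw [← (c.1.mem_supp_iff x).1 hx.1, ← (d.1.mem_supp_iff y).1 hy.1]
  exact ConnectedComponent.sound hr

/-- if `G` has an edge between every two disjoint vertex sets of
size at least `s`, then any linear forest with more than `s` path components
can be extended, using edges of `G`, to a linear forest on the same vertex set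
with at most `s` components. -/
theorem reduce_components_of_linear_forest [Fintype V]
    (G F : SimpleGraph V) (s : ℕ)
    (hG : ∀ X Y : Set V, Disjoint X Y → s ≤ X.ncard → s ≤ Y.ncard →
      ∃ x ∈ X, ∃ y ∈ Y, G.Adj x y)
    (hF : IsLinearForest F) (hcomp : s < numComponents F) :
    ∃ F' : SimpleGraph V, F ≤ F' ∧ F' ≤ F ⊔ G ∧ IsLinearForest F' ∧
      F'.support = F.support ∧ numComponents F' ≤ s := by
  induction hn : numComponents F using Nat.strong_induction_on generalizing F with
  | _ n ih =>
  obtain ⟨x, y, hGxy, hxy, hx, hy⟩ :=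
    IsAcyclic.exists_adj_leaves_not_reachable hG hF.1 (hn ▸ hcomp)
  have hx' := mem_support_of_deg_eq_one hx
  have hy' := mem_support_of_deg_eq_one hy
  have hF₁ : IsLinearForest (F ⊔ edge x y) := hF.sup_edge_s18 hxy hx hy
  have hsupp : (F ⊔ edge x y).support = F.support := support_sup_edge hx' hy'
  have hle : F ⊔ edge x y ≤ F ⊔ G := sup_le_sup_left (G.edge_le_iff.2 (.inr hGxy)) F
  have hlt : numComponents (F ⊔ edge x y) < n := hn ▸
    numComponents_lt_of_le le_sup_left hsupp.le hx' hy' hxy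
      (Adj.reachable (.inr ((edge_adj ..).2 ⟨.inl ⟨rfl, rfl⟩, hGxy.ne⟩)))
  by_cases hdone : numComponents (F ⊔ edge x y) ≤ s
  · exact ⟨F ⊔ edge x y, le_sup_left, hle, hF₁, hsupp, hdone⟩
  obtain ⟨F', hF₁F', hF'G, hF', hF'supp, hF's⟩ := ih _ hlt _ hF₁ (not_le.1 hdone) rfl
  exact ⟨F', le_sup_left.trans hF₁F', hF'G.trans (sup_le hle le_sup_right), hF',
    hF'supp.trans hsupp, hF's⟩

end Paper
end
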